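/- Under the hypotheses of joint connectivity (there exist times t_{j_k} with τ ≤ t_{j_{k+1}} - t_{j_k} ≤ T_c such that Σ_{r=j_k}^{j_{k+1}-1} L_{σ(t_r)} has kernel spanned by 1_N) and collective observability (∩_{i=1}^N ker(𝒪_i) = {0}), the integral ∫_{t*}^{t*+T_o} Uᵀ(L_{σ(t)} ⊗ I_n)U dt satisfies α₁ I_ν ≤ ∫_{t*}^{t*+T_o} Uᵀ(L_{σ(t)} ⊗ I_n)U dt ≤ α₂ I_ν for all t* ≥ 0, with T_o = 2T_c and constants 0 < α₁ ≤ α₂ independent of t*. In other words, the system η̇ = 0, ȳ = (L_{σ(t)}^{1/2} ⊗ I_n)Uη is uniformly completely observable. -/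

import Mathlib

/-!
Every window `[t*, t* + 2 T_c]` contains a full connectivity interval `[t_{j_k}, t_{j_{k+1}}]`;
by the dwell time, the integral over it is at least `τ ηᵀ Uᵀ (Σ_{p ∈ P} L_p ⊗ Iₙ) U η`, where `P`
is the set of modes active there. For positive semidefinite matrices the kernel of a sum depends
only on the set of summands, so joint connectivity gives `ker Σ_{p ∈ P} L_p = span 𝟙`. An `η` in the
kernel of `Uᵀ (Σ_{p ∈ P} L_p ⊗ Iₙ) U` therefore has `Uᵢ ηᵢ = w` for all agents `i`; then `w` lies
in every `ker 𝒪ᵢ`, so `w = 0` by collective observability and `η = 0` since the `Uᵢ` are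
injective. As there are finitely many `P`, the lower bound is uniform in `t*`.
-/

open Matrix Kronecker MeasureTheory Set

/-- The observability matrix `𝒪ᵢ = col(Cᵢ, CᵢA, …, CᵢA^{n-1})`. -/
def obsMat {n m : ℕ} (C : Matrix (Fin m) (Fin n) ℝ) (A : Matrix (Fin n) (Fin n) ℝ) :
    Matrix (Fin n × Fin m) (Fin n) ℝ :=
  Matrix.of fun p j => (C * A ^ (p.1 : ℕ)) p.2 j

/-- The block diagonal matrix `U = blockdiag(U₁, …, U_N)`. -/
def blockDiagU {N n : ℕ} {ν : Fin N → ℕ} (U : ∀ i, Matrix (Fin n) (Fin (ν i)) ℝ) :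
    Matrix (Fin N × Fin n) ((i : Fin N) × Fin (ν i)) ℝ :=
  Matrix.of fun p q => if p.1 = q.1 then U q.1 p.2 q.2 else 0

namespace Matrix

section QuadraticBounds

open scoped MatrixOrder

variable {ι : Type*} [Fintype ι]

lemma dotProduct_algebraMap_mulVec [DecidableEq ι] (r : ℝ) (v : ι → ℝ) :
    v ⬝ᵥ algebraMap ℝ (Matrix ι ι ℝ) r *ᵥ v = r * ∑ q, v q ^ 2 := by
  simp only [algebraMap_eq_diagonal, mulVec_diagonal, dotProduct, Finset.mul_sum,
    Pi.algebraMap_apply, Algebra.algebraMap_self, RingHom.id_apply]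
  exact Finset.sum_congr rfl fun q _ => by ring

lemma dotProduct_mulVec_le_of_le {M M' : Matrix ι ι ℝ} (h : M ≤ M') (v : ι → ℝ) :
    v ⬝ᵥ M *ᵥ v ≤ v ⬝ᵥ M' *ᵥ v := by
  simpa [sub_mulVec] using (le_iff.mp h).dotProduct_mulVec_nonneg v

lemma PosDef.exists_pos_mul_sum_sq_le [DecidableEq ι] {M : Matrix ι ι ℝ} (hM : M.PosDef) :
    ∃ c > 0, ∀ v : ι → ℝ, c * ∑ q, v q ^ 2 ≤ v ⬝ᵥ M *ᵥ v := by
  cases isEmpty_or_nonempty ι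
  · exact ⟨1, one_pos, fun v => by simp⟩
  obtain ⟨c, hc, hle⟩ := (CFC.exists_pos_algebraMap_le_iff hM.isHermitian.isSelfAdjoint).2
    fun x hx => hM.isStrictlyPositive.spectrum_pos hx
  exact ⟨c, hc, fun v => dotProduct_algebraMap_mulVec c v ▸ dotProduct_mulVec_le_of_le hle v⟩

lemma IsHermitian.exists_dotProduct_mulVec_le [DecidableEq ι] {M : Matrix ι ι ℝ}
    (hM : M.IsHermitian) : ∃ C, ∀ v : ι → ℝ, v ⬝ᵥ M *ᵥ v ≤ C * ∑ q, v q ^ 2 := by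
  obtain ⟨C, hC⟩ := M.finite_real_spectrum.bddAbove
  exact ⟨C, fun v => dotProduct_algebraMap_mulVec C v ▸
    dotProduct_mulVec_le_of_le (le_algebraMap_of_spectrum_le (fun x hx => hC hx)
      hM.isSelfAdjoint) v⟩

lemma exists_pos_forall_mul_sum_sq_le_of_posDef [DecidableEq ι] {κ : Type*} [Finite κ]
    (M : κ → Matrix ι ι ℝ) :
    ∃ c > 0, ∀ k, (M k).PosDef → ∀ v : ι → ℝ, c * ∑ q, v q ^ 2 ≤ v ⬝ᵥ M k *ᵥ v := by
  have hbound : ∀ k, ∃ c > 0, (M k).PosDef → ∀ v : ι → ℝ,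
      c * ∑ q, v q ^ 2 ≤ v ⬝ᵥ M k *ᵥ v := fun k => by
    by_cases h : (M k).PosDef
    · obtain ⟨c, hc, hcM⟩ := h.exists_pos_mul_sum_sq_le
      exact ⟨c, hc, fun _ => hcM⟩
    · exact ⟨1, one_pos, fun h' => absurd h' h⟩
  choose c hc hcM using hbound
  cases isEmpty_or_nonempty κ
  · exact ⟨1, one_pos, fun k => isEmptyElim k⟩
  obtain ⟨k₀, hk₀⟩ := Finite.exists_min c
  exact ⟨c k₀, hc k₀, fun k hk v =>
    (mul_le_mul_of_nonneg_right (hk₀ k) (by positivity)).trans (hcM k hk v)⟩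

end QuadraticBounds

lemma kronecker_one_mulVec_apply {R ι κ : Type*} [CommSemiring R] [Fintype ι] [Fintype κ]
    [DecidableEq κ] (L : Matrix ι ι R) (x : ι × κ → R) (i : ι) (a : κ) :
    ((L ⊗ₖ (1 : Matrix κ κ R)) *ᵥ x) (i, a) = (L *ᵥ fun j => x (j, a)) i := by
  simp only [mulVec, dotProduct, Fintype.sum_prod_type, kroneckerMap_apply, one_apply,
    mul_ite, mul_one, mul_zero, ite_mul, zero_mul, Finset.sum_ite_eq, Finset.mem_univ, if_true]

lemma sum_kronecker {R ι κ μ : Type*} [CommSemiring R] (s : Finset μ) (L : μ → Matrix ι ι R)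
    (B : Matrix κ κ R) : (∑ k ∈ s, L k) ⊗ₖ B = ∑ k ∈ s, L k ⊗ₖ B := by
  ext; simp [Matrix.sum_apply, Finset.sum_mul]

lemma dotProduct_transpose_mul_mul_mulVec {R ι κ : Type*} [CommSemiring R] [Fintype ι]
    [Fintype κ] (W : Matrix ι κ R) (M : Matrix ι ι R) (v : κ → R) :
    v ⬝ᵥ (Wᵀ * M * W) *ᵥ v = (W *ᵥ v) ⬝ᵥ M *ᵥ (W *ᵥ v) := by
  rw [Matrix.mul_assoc, ← mulVec_mulVec, ← mulVec_mulVec, dotProduct_mulVec, vecMul_transpose]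

section KerSum

open scoped ComplexOrder

variable {𝕜 ι κ : Type*} [RCLike 𝕜] [Fintype ι] {L : κ → Matrix ι ι 𝕜}

lemma ker_sum_mulVecLin_of_posSemidef {s : Finset κ} (hL : ∀ k ∈ s, (L k).PosSemidef) :
    LinearMap.ker (∑ k ∈ s, L k).mulVecLin = ⨅ k ∈ s, LinearMap.ker (L k).mulVecLin := by
  ext x
  have hsum : (∑ k ∈ s, L k).PosSemidef := Finset.sum_induction _ _ (fun _ _ => .add) .zero hL
  simp only [LinearMap.mem_ker, Submodule.mem_iInf, mulVecLin_apply]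
  rw [← hsum.dotProduct_mulVec_zero_iff, sum_mulVec, dotProduct_sum,
    Finset.sum_eq_zero_iff_of_nonneg fun k hk => (hL k hk).dotProduct_mulVec_nonneg x]
  exact forall₂_congr fun k hk => (hL k hk).dotProduct_mulVec_zero_iff x

lemma ker_sum_image_mulVecLin_of_posSemidef [DecidableEq κ] {μ : Type*} {s : Finset μ}
    {g : μ → κ} (hL : ∀ k, (L k).PosSemidef) :
    LinearMap.ker (∑ k ∈ s.image g, L k).mulVecLin
      = LinearMap.ker (∑ r ∈ s, L (g r)).mulVecLin := by
  rw [ker_sum_mulVecLin_of_posSemidef fun k _ => hL k,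
    ker_sum_mulVecLin_of_posSemidef fun r _ => hL (g r), Finset.iInf_finset_image]

end KerSum

end Matrix

section ReducedLaplacian

variable {N n : ℕ} {ν : Fin N → ℕ}

/-- The Laplacian `L` compressed to the unobservable subspaces `im Uᵢ = ker 𝒪ᵢ`. -/
def reducedLaplacian (U : ∀ i, Matrix (Fin n) (Fin (ν i)) ℝ) (L : Matrix (Fin N) (Fin N) ℝ) :
    Matrix ((i : Fin N) × Fin (ν i)) ((i : Fin N) × Fin (ν i)) ℝ :=
  (blockDiagU U)ᵀ * (L ⊗ₖ (1 : Matrix (Fin n) (Fin n) ℝ)) * blockDiagU U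

lemma blockDiagU_mulVec_apply (U : ∀ i, Matrix (Fin n) (Fin (ν i)) ℝ)
    (v : ((i : Fin N) × Fin (ν i)) → ℝ) (i : Fin N) (a : Fin n) :
    (blockDiagU U *ᵥ v) (i, a) = (U i *ᵥ fun b => v ⟨i, b⟩) a := by
  simp only [blockDiagU, mulVec, dotProduct, of_apply, ← Finset.univ_sigma_univ,
    Finset.sum_sigma, ite_mul, zero_mul, Finset.sum_ite_irrel, Finset.sum_const_zero,
    Finset.sum_ite_eq, Finset.mem_univ, if_true]

lemma eq_zero_of_blockDiagU_mulVec_apply_eq {U : ∀ i, Matrix (Fin n) (Fin (ν i)) ℝ}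
    (hU : ⨅ i, LinearMap.range (U i).mulVecLin = ⊥)
    (hUinj : ∀ i, Function.Injective (U i).mulVecLin)
    {v : ((i : Fin N) × Fin (ν i)) → ℝ} {w : Fin n → ℝ}
    (h : ∀ i a, (blockDiagU U *ᵥ v) (i, a) = w a) : v = 0 := by
  have hUv : ∀ i, (U i).mulVecLin (fun b => v ⟨i, b⟩) = w := fun i =>
    funext fun a => (blockDiagU_mulVec_apply U v i a).symm.trans (h i a)
  have hw : w = 0 := by
    rw [← Submodule.mem_bot ℝ, ← hU, Submodule.mem_iInf]
    exact fun i => ⟨_, hUv i⟩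
  funext ⟨i, b⟩
  exact congrFun (hUinj i ((hUv i).trans (hw.trans (map_zero _).symm))) b

lemma Matrix.PosSemidef.reducedLaplacian {L : Matrix (Fin N) (Fin N) ℝ} (hL : L.PosSemidef)
    (U : ∀ i, Matrix (Fin n) (Fin (ν i)) ℝ) : (reducedLaplacian U L).PosSemidef :=
  (hL.kronecker PosSemidef.one).conjTranspose_mul_mul_same (blockDiagU U)

lemma posDef_reducedLaplacian {U : ∀ i, Matrix (Fin n) (Fin (ν i)) ℝ}
    (hU : ⨅ i, LinearMap.range (U i).mulVecLin = ⊥)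
    (hUinj : ∀ i, Function.Injective (U i).mulVecLin)
    {L : Matrix (Fin N) (Fin N) ℝ} (hL : L.PosSemidef)
    (hker : LinearMap.ker L.mulVecLin ≤ Submodule.span ℝ {fun _ => (1 : ℝ)}) :
    (reducedLaplacian U L).PosDef := by
  have hpsd := hL.reducedLaplacian U
  refine .of_dotProduct_mulVec_pos hpsd.isHermitian fun v hv =>
    (hpsd.dotProduct_mulVec_nonneg v).lt_of_ne fun h0 => hv ?_
  have hK : (L ⊗ₖ (1 : Matrix (Fin n) (Fin n) ℝ)) *ᵥ (blockDiagU U *ᵥ v) = 0 := by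
    rw [← (hL.kronecker PosSemidef.one).dotProduct_mulVec_zero_iff, star_trivial,
      ← dotProduct_transpose_mul_mul_mulVec]
    exact h0.symm
  have hcol : ∀ a, ∃ c : ℝ, c • (fun _ => (1 : ℝ)) = fun j => (blockDiagU U *ᵥ v) (j, a) :=
    fun a => Submodule.mem_span_singleton.mp <| hker <| funext fun i => by
      simpa [Matrix.kronecker_one_mulVec_apply] using congrFun hK (i, a)
  choose w hw using hcol
  exact eq_zero_of_blockDiagU_mulVec_apply_eq hU hUinj (w := w) fun i a => by
    simpa using (congrFun (hw a) i).symm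

lemma sum_dotProduct_reducedLaplacian_mulVec {κ : Type*} (U : ∀ i, Matrix (Fin n) (Fin (ν i)) ℝ)
    (s : Finset κ) (L : κ → Matrix (Fin N) (Fin N) ℝ) (v : ((i : Fin N) × Fin (ν i)) → ℝ) :
    ∑ k ∈ s, v ⬝ᵥ reducedLaplacian U (L k) *ᵥ v = v ⬝ᵥ reducedLaplacian U (∑ k ∈ s, L k) *ᵥ v := by
  rw [reducedLaplacian, Matrix.sum_kronecker, Matrix.mul_sum, Matrix.sum_mul, sum_mulVec,
    dotProduct_sum]
  rfl

end ReducedLaplacian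

section PiecewiseConstant

variable {E : Type*} [NormedAddCommGroup E] {f : ℝ → E}

lemma intervalIntegrable_of_eqOn_Ico {a b : ℝ} {c : E} (hab : a ≤ b)
    (hf : EqOn f (fun _ => c) (Ico a b)) : IntervalIntegrable f volume a b :=
  (intervalIntegrable_iff_integrableOn_Ico_of_le hab).2 <|
    (integrableOn_const measure_Ico_lt_top.ne).congr_fun hf.symm measurableSet_Ico

lemma intervalIntegrable_of_piecewise_const {t : ℕ → ℝ} (ht : Monotone t)
    (hf : ∀ j, EqOn f (fun _ => f (t j)) (Ico (t j) (t (j + 1)))) {x y : ℝ} {J : ℕ}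
    (hx : t 0 ≤ x) (hxy : x ≤ y) (hy : y ≤ t J) : IntervalIntegrable f volume x y :=
  (IntervalIntegrable.trans_iterate fun r _ =>
    intervalIntegrable_of_eqOn_Ico (ht r.le_succ) (hf r)).mono_set <| by
    rw [uIcc_of_le hxy, uIcc_of_le (hx.trans (hxy.trans hy))]
    exact Icc_subset_Icc hx hy

variable [NormedSpace ℝ E] [CompleteSpace E]

lemma intervalIntegral_eq_of_eqOn_Ico {a b : ℝ} {c : E} (hab : a ≤ b)
    (hf : EqOn f (fun _ => c) (Ico a b)) : ∫ s in a..b, f s = (b - a) • c := by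
  rw [intervalIntegral.integral_of_le hab, ← integral_Ico_eq_integral_Ioc,
    setIntegral_congr_fun measurableSet_Ico hf, setIntegral_const,
    Real.volume_real_Ico_of_le hab]

lemma intervalIntegral_eq_sum_of_piecewise_const {t : ℕ → ℝ} (ht : Monotone t)
    (hf : ∀ j, EqOn f (fun _ => f (t j)) (Ico (t j) (t (j + 1)))) {a b : ℕ} (hab : a ≤ b) :
    ∫ s in t a..t b, f s = ∑ r ∈ Finset.Ico a b, (t (r + 1) - t r) • f (t r) := by
  rw [← intervalIntegral.sum_integral_adjacent_intervals_Ico hab fun r _ =>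
    intervalIntegrable_of_eqOn_Ico (ht r.le_succ) (hf r)]
  exact Finset.sum_congr rfl fun r _ => intervalIntegral_eq_of_eqOn_Ico (ht r.le_succ) (hf r)

end PiecewiseConstant

section SwitchingTimes

variable {s : ℕ → ℝ} {τ : ℝ}

lemma monotone_of_le_sub_succ (hτ : 0 ≤ τ) (hs : ∀ k, τ ≤ s (k + 1) - s k) : Monotone s :=
  monotone_nat_of_le_succ fun k => by linarith [hs k]

lemma exists_lt_of_le_sub_succ (hτ : 0 < τ) (hs : ∀ k, τ ≤ s (k + 1) - s k) (x : ℝ) :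
    ∃ n, x < s n := by
  have hgrowth : ∀ k : ℕ, s 0 + k * τ ≤ s k := fun k => by
    induction k with
    | zero => simp
    | succ k ih => push_cast; linarith [hs k]
  obtain ⟨n, hn⟩ := exists_nat_gt ((x - s 0) / τ)
  rw [div_lt_iff₀ hτ] at hn
  exact ⟨n, by linarith [hgrowth n]⟩

lemma exists_le_and_lt_succ {α : Type*} [LinearOrder α] {s : ℕ → α} {x : α} (h0 : s 0 ≤ x)
    (h : ∃ n, x < s n) : ∃ k, s k ≤ x ∧ x < s (k + 1) := by
  by_contra! hs
  obtain ⟨n, hn⟩ := h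
  exact (Nat.rec h0 (fun k hk => hs k hk) n : s n ≤ x).not_gt hn

lemma exists_gap_subset_Icc {T x : ℝ} (hτ : 0 < τ) (hs0 : s 0 ≤ x)
    (hgap : ∀ k, τ ≤ s (k + 1) - s k ∧ s (k + 1) - s k ≤ T) :
    ∃ k, x ≤ s (k + 1) ∧ s (k + 1) ≤ s (k + 2) ∧ s (k + 2) ≤ x + 2 * T := by
  obtain ⟨k, hk, hk'⟩ :=
    exists_le_and_lt_succ hs0 (exists_lt_of_le_sub_succ hτ (fun k => (hgap k).1) x)
  exact ⟨k, hk'.le, by linarith [(hgap (k + 1)).1], by linarith [(hgap k).2, (hgap (k + 1)).2]⟩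

variable {ι : Type*} {t : ℕ → ℝ} {σ : ℝ → ι}

lemma intervalIntegrable_comp_of_dwell {E : Type*} [NormedAddCommGroup E] {x y : ℝ}
    (hτ : 0 < τ) (hdwell : ∀ j, τ ≤ t (j + 1) - t j)
    (hσ : ∀ j s, t j ≤ s → s < t (j + 1) → σ s = σ (t j)) (g : ι → E) (hx : t 0 ≤ x)
    (hxy : x ≤ y) : IntervalIntegrable (fun s => g (σ s)) volume x y := by
  obtain ⟨J, hJ⟩ := exists_lt_of_le_sub_succ hτ hdwell y
  exact intervalIntegrable_of_piecewise_const (monotone_of_le_sub_succ hτ.le hdwell)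
    (fun j s hs => congrArg g (hσ j s hs.1 hs.2)) hx hxy hJ.le

lemma integral_comp_le_of_dwell {q : ι → ℝ} {B x y : ℝ} (hτ : 0 < τ)
    (hdwell : ∀ j, τ ≤ t (j + 1) - t j) (hσ : ∀ j s, t j ≤ s → s < t (j + 1) → σ s = σ (t j))
    (hx : t 0 ≤ x) (hxy : x ≤ y) (hB : ∀ p, q p ≤ B) :
    ∫ s in x..y, q (σ s) ≤ (y - x) * B := by
  simpa using intervalIntegral.integral_mono_on hxy
    (intervalIntegrable_comp_of_dwell hτ hdwell hσ q hx hxy) intervalIntegrable_const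
    fun s _ => hB (σ s)

lemma dwell_mul_sum_image_le_integral [DecidableEq ι] {q : ι → ℝ} (hq : ∀ p, 0 ≤ q p)
    (hτ : 0 ≤ τ) (hdwell : ∀ j, τ ≤ t (j + 1) - t j)
    (hσ : ∀ j s, t j ≤ s → s < t (j + 1) → σ s = σ (t j)) {a b : ℕ} (hab : a ≤ b) :
    τ * ∑ p ∈ (Finset.Ico a b).image (σ ∘ t), q p ≤ ∫ s in t a..t b, q (σ s) := by
  rw [intervalIntegral_eq_sum_of_piecewise_const (f := fun s => q (σ s))
    (monotone_of_le_sub_succ hτ hdwell) (fun j s hs => congrArg q (hσ j s hs.1 hs.2)) hab]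
  calc τ * ∑ p ∈ (Finset.Ico a b).image (σ ∘ t), q p
      ≤ τ * ∑ r ∈ Finset.Ico a b, q (σ (t r)) :=
        mul_le_mul_of_nonneg_left (Finset.sum_image_le_of_nonneg fun p _ => hq p) hτ
    _ = ∑ r ∈ Finset.Ico a b, τ * q (σ (t r)) := Finset.mul_sum _ _ _
    _ ≤ ∑ r ∈ Finset.Ico a b, (t (r + 1) - t r) • q (σ (t r)) :=
        Finset.sum_le_sum fun r _ => mul_le_mul_of_nonneg_right (hdwell r) (hq _)

lemma exists_window_mul_sum_image_le_integral [DecidableEq ι] {q : ι → ℝ} {jk : ℕ → ℕ}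
    {T x : ℝ} (hq : ∀ p, 0 ≤ q p) (hτ : 0 < τ) (hdwell : ∀ j, τ ≤ t (j + 1) - t j)
    (hσ : ∀ j s, t j ≤ s → s < t (j + 1) → σ s = σ (t j)) (hjk : Monotone jk)
    (hgap : ∀ k, τ ≤ t (jk (k + 1)) - t (jk k) ∧ t (jk (k + 1)) - t (jk k) ≤ T)
    (hx : t (jk 0) ≤ x) :
    ∃ k, τ * ∑ p ∈ (Finset.Ico (jk (k + 1)) (jk (k + 2))).image (σ ∘ t), q p
      ≤ ∫ s in x..x + 2 * T, q (σ s) := by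
  obtain ⟨k, hk₁, hk₂, hk₃⟩ := exists_gap_subset_Icc (s := fun k => t (jk k)) hτ hx hgap
  refine ⟨k, (dwell_mul_sum_image_le_integral hq hτ.le hdwell hσ (hjk (by omega))).trans ?_⟩
  have ht0 : t 0 ≤ x := (monotone_of_le_sub_succ hτ.le hdwell (Nat.zero_le _)).trans hx
  exact intervalIntegral.integral_mono_interval hk₁ hk₂ hk₃ (ae_of_all _ fun s => hq _)
    (intervalIntegrable_comp_of_dwell hτ hdwell hσ q ht0 (hk₁.trans (hk₂.trans hk₃)))

end SwitchingTimes

theorem uco_gramian_bounds_general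
    {N n n₀ : ℕ} {m ν : Fin N → ℕ}
    (A : Matrix (Fin n) (Fin n) ℝ)
    (C : ∀ i, Matrix (Fin (m i)) (Fin n) ℝ)
    (hobs : ⨅ i, LinearMap.ker (obsMat (C i) A).mulVecLin = ⊥)
    (U : ∀ i, Matrix (Fin n) (Fin (ν i)) ℝ)
    (hUrank : ∀ i, Function.Injective (U i).mulVecLin)
    (hUker : ∀ i, LinearMap.range (U i).mulVecLin = LinearMap.ker (obsMat (C i) A).mulVecLin)
    (Lap : Fin n₀ → Matrix (Fin N) (Fin N) ℝ)
    (hLap : ∀ p, (Lap p).PosSemidef)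
    (σ : ℝ → Fin n₀)
    (τ Tc : ℝ) (hτ : 0 < τ)
    (tj : ℕ → ℝ) (htj0 : tj 0 = 0)
    (hdwell : ∀ j, τ ≤ tj (j + 1) - tj j)
    (hσconst : ∀ j t, tj j ≤ t → t < tj (j + 1) → σ t = σ (tj j))
    (jk : ℕ → ℕ) (hjk0 : jk 0 = 0) (hjkmono : StrictMono jk)
    (hjkgap : ∀ k, τ ≤ tj (jk (k + 1)) - tj (jk k) ∧ tj (jk (k + 1)) - tj (jk k) ≤ Tc)
    (hconn : ∀ k, LinearMap.ker
        (∑ r ∈ Finset.Ico (jk k) (jk (k + 1)), Lap (σ (tj r))).mulVecLin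
        = Submodule.span ℝ {fun _ => (1 : ℝ)}) :
    ∃ α₁ α₂ : ℝ, 0 < α₁ ∧ α₁ ≤ α₂ ∧
      ∀ tstar : ℝ, 0 ≤ tstar → ∀ v : ((i : Fin N) × Fin (ν i)) → ℝ,
        α₁ * (∑ q, v q ^ 2) ≤
          (∫ t in tstar..(tstar + 2 * Tc),
            v ⬝ᵥ ((blockDiagU U)ᵀ * (Lap (σ t) ⊗ₖ (1 : Matrix (Fin n) (Fin n) ℝ)) *
              blockDiagU U).mulVec v) ∧
        (∫ t in tstar..(tstar + 2 * Tc),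
            v ⬝ᵥ ((blockDiagU U)ᵀ * (Lap (σ t) ⊗ₖ (1 : Matrix (Fin n) (Fin n) ℝ)) *
              blockDiagU U).mulVec v) ≤ α₂ * (∑ q, v q ^ 2) := by
  classical
  have hU : ⨅ i, LinearMap.range (U i).mulVecLin = ⊥ := by simpa only [hUker] using hobs
  have hsum : ∀ P : Finset (Fin n₀), (∑ p ∈ P, Lap p).PosSemidef := fun P =>
    Finset.sum_induction _ _ (fun _ _ => .add) .zero fun p _ => hLap p
  obtain ⟨c, hc, hcR⟩ := exists_pos_forall_mul_sum_sq_le_of_posDef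
    fun P : Finset (Fin n₀) => reducedLaplacian U (∑ p ∈ P, Lap p)
  obtain ⟨C, hC⟩ := ((hsum Finset.univ).reducedLaplacian U).isHermitian.exists_dotProduct_mulVec_le
  have hTc : 0 ≤ Tc := by linarith [(hjkgap 0).1, (hjkgap 0).2]
  refine ⟨τ * c, max (τ * c) (2 * Tc * C), by positivity, le_max_left _ _, fun tstar htstar v => ?_⟩
  set q : Fin n₀ → ℝ := fun p => v ⬝ᵥ reducedLaplacian U (Lap p) *ᵥ v
  change _ ≤ ∫ s in tstar..tstar + 2 * Tc, q (σ s) ∧ ∫ s in tstar..tstar + 2 * Tc, q (σ s) ≤ _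
  have hq : ∀ p, 0 ≤ q p := fun p => by
    simpa using ((hLap p).reducedLaplacian U).dotProduct_mulVec_nonneg v
  obtain ⟨k, hk⟩ := exists_window_mul_sum_image_le_integral hq hτ hdwell hσconst
    hjkmono.monotone hjkgap (by simpa [hjk0, htj0] using htstar)
  have hPD := posDef_reducedLaplacian hU hUrank (hsum _)
    (by rw [ker_sum_image_mulVecLin_of_posSemidef hLap]; exact (hconn (k + 1)).le)
  constructor
  · calc τ * c * ∑ q, v q ^ 2
        ≤ τ * ∑ p ∈ (Finset.Ico (jk (k + 1)) (jk (k + 2))).image (σ ∘ tj), q p := by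
          rw [mul_assoc, sum_dotProduct_reducedLaplacian_mulVec]
          exact mul_le_mul_of_nonneg_left (hcR _ hPD v) hτ.le
      _ ≤ _ := hk
  · calc ∫ s in tstar..tstar + 2 * Tc, q (σ s) ≤ (tstar + 2 * Tc - tstar) * (C * ∑ q, v q ^ 2) :=
          integral_comp_le_of_dwell hτ hdwell hσconst (htj0 ▸ htstar) (by linarith) fun p =>
            (Finset.single_le_sum (fun p _ => hq p) (Finset.mem_univ p)).trans
              ((sum_dotProduct_reducedLaplacian_mulVec U _ Lap v).trans_le (hC v))
      _ ≤ max (τ * c) (2 * Tc * C) * ∑ q, v q ^ 2 := by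
          rw [add_sub_cancel_left, ← mul_assoc]
          exact mul_le_mul_of_nonneg_right (le_max_right _ _) (by positivity)

/-- Uniform complete observability of the system `η̇ = 0, ȳ = (L_{σ(t)}^{1/2} ⊗ I_n) U η`:
under joint connectivity and collective observability, the observability Gramian
`∫_{t*}^{t*+T_o} Uᵀ (L_{σ(t)} ⊗ I_n) U dt` with `T_o = 2 T_c` is bounded below and above by
`α₁ I` and `α₂ I` (as quadratic forms), uniformly in `t* ≥ 0`. -/
theorem uco_gramian_bounds
    {N n n₀ : ℕ} {m ν : Fin N → ℕ}
    (A : Matrix (Fin n) (Fin n) ℝ)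
    (C : ∀ i, Matrix (Fin (m i)) (Fin n) ℝ)
    (hobs : ⨅ i, LinearMap.ker (obsMat (C i) A).mulVecLin = ⊥)
    (U : ∀ i, Matrix (Fin n) (Fin (ν i)) ℝ)
    (hUrank : ∀ i, Function.Injective (U i).mulVecLin)
    (hUker : ∀ i, LinearMap.range (U i).mulVecLin = LinearMap.ker (obsMat (C i) A).mulVecLin)
    (Lap : Fin n₀ → Matrix (Fin N) (Fin N) ℝ)
    (hLap : ∀ p, (Lap p).PosSemidef)
    (σ : ℝ → Fin n₀)
    (τ Tc : ℝ) (hτ : 0 < τ) (hτTc : τ ≤ Tc)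
    (tj : ℕ → ℝ) (htj0 : tj 0 = 0)
    (hdwell : ∀ j, τ ≤ tj (j + 1) - tj j)
    (hσconst : ∀ j t, tj j ≤ t → t < tj (j + 1) → σ t = σ (tj j))
    (jk : ℕ → ℕ) (hjk0 : jk 0 = 0) (hjkmono : StrictMono jk)
    (hjkgap : ∀ k, τ ≤ tj (jk (k + 1)) - tj (jk k) ∧ tj (jk (k + 1)) - tj (jk k) ≤ Tc)
    (hconn : ∀ k, LinearMap.ker
        (∑ r ∈ Finset.Ico (jk k) (jk (k + 1)), Lap (σ (tj r))).mulVecLin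
        = Submodule.span ℝ {fun _ => (1 : ℝ)}) :
    ∃ α₁ α₂ : ℝ, 0 < α₁ ∧ α₁ ≤ α₂ ∧
      ∀ tstar : ℝ, 0 ≤ tstar → ∀ v : ((i : Fin N) × Fin (ν i)) → ℝ,
        α₁ * (∑ q, v q ^ 2) ≤
          (∫ t in tstar..(tstar + 2 * Tc),
            v ⬝ᵥ ((blockDiagU U)ᵀ * (Lap (σ t) ⊗ₖ (1 : Matrix (Fin n) (Fin n) ℝ)) *
              blockDiagU U).mulVec v) ∧
        (∫ t in tstar..(tstar + 2 * Tc),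
            v ⬝ᵥ ((blockDiagU U)ᵀ * (Lap (σ t) ⊗ₖ (1 : Matrix (Fin n) (Fin n) ℝ)) *
              blockDiagU U).mulVec v) ≤ α₂ * (∑ q, v q ^ 2) :=
  uco_gramian_bounds_general A C hobs U hUrank hUker Lap hLap σ τ Tc hτ tj htj0 hdwell hσconst jk
    hjk0 hjkmono hjkgap hconn
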